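/- arXiv:2409.02463 — 6 statements merged into one kernel-verified Lean document; each statement's English description precedes it below -/
import Mathlib

section
/- Two finite multisets A and B of complex numbers, of sizes m and n respectively with m ≤ n, satisfy Σ_{a∈A} a^ℓ = Σ_{b∈B} b^ℓ for all ℓ = 0, 1, ..., n−1 if and only if B equals A together with n−m copies of 0. In particular, if the power sums agree for all ℓ ≥ 0 up to n−1 then the nonzero elements of A and B coincide as multisets. -/
/-!
Newton's identities express `k • eₖ` through `e₀, …, eₖ₋₁` and the power sums `p₁, …, pₖ`, so
over a torsion-free ring equal power sums up to degree `n` force equal elementary symmetric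
functions up to degree `n`. Two multisets of the same size `n` with the same `e₀, …, eₙ` are the
root multisets of the same monic polynomial `∏ (X - a)`, hence equal. Padding `A` with zeros
changes neither its power sums of positive degree nor its nonzero elements, and brings it to
size `n`.
-/

open Polynomial

namespace Multiset

variable {R : Type*}

theorem sum_map_pow_add_replicate_zero [Semiring R] (s : Multiset R) (k : ℕ) {ℓ : ℕ}
    (hℓ : ℓ ≠ 0) :
    ((s + replicate k 0).map fun a => a ^ ℓ).sum = (s.map fun a => a ^ ℓ).sum := by
  simp [zero_pow hℓ]

theorem mul_esymm_eq_sum [CommRing R] (s : Multiset R) (k : ℕ) :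
    k * s.esymm k = (-1) ^ (k + 1) *
      ∑ a ∈ Finset.HasAntidiagonal.antidiagonal k with a.1 < k,
        (-1) ^ a.1 * s.esymm a.1 * (s.map fun x => x ^ a.2).sum := by
  classical
  have aeval_psum (j : ℕ) :
      MvPolynomial.aeval (fun x : s => (x : R)) (MvPolynomial.psum s R j) =
        (s.map fun x => x ^ j).sum := by
    rw [MvPolynomial.psum, map_sum, Finset.sum_eq_multiset_sum]
    simp only [map_pow, MvPolynomial.aeval_X]
    rw [map_univ s (· ^ j)]
  have aeval_esymm (j : ℕ) :
      MvPolynomial.aeval (fun x : s => (x : R)) (MvPolynomial.esymm s R j) = s.esymm j := by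
    rw [MvPolynomial.aeval_esymm_eq_multiset_esymm, map_univ_coe]
  simpa only [map_mul, map_pow, map_sum, map_natCast, map_neg, map_one, aeval_psum, aeval_esymm]
    using congrArg (MvPolynomial.aeval fun x : s => (x : R)) (MvPolynomial.mul_esymm_eq_sum s R k)

theorem esymm_eq_of_sum_map_pow_eq [CommRing R] [IsAddTorsionFree R] {s t : Multiset R} {n : ℕ}
    (h : ∀ ℓ, 1 ≤ ℓ → ℓ ≤ n → (s.map fun a => a ^ ℓ).sum = (t.map fun a => a ^ ℓ).sum)
    {k : ℕ} (hk : k ≤ n) : s.esymm k = t.esymm k := by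
  induction k using Nat.strong_induction_on with
  | _ k ih =>
    rcases Nat.eq_zero_or_pos k with rfl | hk0
    · simp [esymm]
    · refine IsAddTorsionFree.nsmul_right_injective hk0.ne' ?_
      simp only [nsmul_eq_mul]
      rw [mul_esymm_eq_sum, mul_esymm_eq_sum]
      congr 1
      refine Finset.sum_congr rfl fun a ha => ?_
      rw [Finset.mem_filter, Finset.HasAntidiagonal.mem_antidiagonal] at ha
      rw [ih a.1 ha.2 (by omega), h a.2 (by omega) (by omega)]

theorem eq_of_card_eq_of_esymm_eq [CommRing R] [IsDomain R] {s t : Multiset R}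
    (hcard : card s = card t) (h : ∀ k ≤ card s, s.esymm k = t.esymm k) : s = t := by
  rw [← roots_multiset_prod_X_sub_C s, ← roots_multiset_prod_X_sub_C t,
    prod_X_sub_X_eq_sum_esymm, prod_X_sub_X_eq_sum_esymm, ← hcard]
  refine congrArg _ (Finset.sum_congr rfl fun k hk => ?_)
  rw [h k (Finset.mem_range_succ_iff.mp hk)]

end Multiset

/-- Two finite multisets `A`, `B` of complex numbers of sizes `m ≤ n`
have equal power sums `∑ a^ℓ` for `ℓ = 1, …, n` if and only if `B` is `A` together with
`n - m` copies of `0`.  (In particular the nonzero elements of `A` and `B` then coincide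
as multisets.) -/
theorem multiset_power_sums_eq_iff_eq_add_zeros
    (A B : Multiset ℂ) (m n : ℕ) (hA : Multiset.card A = m) (hB : Multiset.card B = n)
    (hmn : m ≤ n) :
    (∀ ℓ : ℕ, 1 ≤ ℓ → ℓ ≤ n →
        (A.map (fun a => a ^ ℓ)).sum = (B.map (fun b => b ^ ℓ)).sum) ↔
      B = A + Multiset.replicate (n - m) 0 := by
  constructor
  · intro h
    have hcard : Multiset.card B = Multiset.card (A + Multiset.replicate (n - m) 0) := by
      simp only [Multiset.card_add, Multiset.card_replicate]
      omega
    refine Multiset.eq_of_card_eq_of_esymm_eq hcard fun k hk =>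
      Multiset.esymm_eq_of_sum_map_pow_eq (fun ℓ h1 h2 => ?_) (hB ▸ hk)
    rw [Multiset.sum_map_pow_add_replicate_zero _ _ (by omega)]
    exact (h ℓ h1 h2).symm
  · rintro rfl ℓ h1 -
    rw [Multiset.sum_map_pow_add_replicate_zero _ _ (by omega)]
end

section
/- Let Γ be a finite graph with combined voltage assignment (α,ω) in a finite group G. Left multiplication by elements of G, g·(u,hG_u) := (u, ghG_u) on vertices and g·(a,h) := (a, gh) on arcs, defines an action of G on the factored lift Γ^(α,ω) by graph automorphisms, and this action is free on the arc set. -/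
open Function

section LeftMulOnSecondFactor

variable {X G : Type*} [Group G]

theorem bijective_prodMk_mul_left (g : G) : Bijective fun p : X × G => (p.1, g * p.2) :=
  bijective_id.prodMap (Group.mulLeft_bijective g)

theorem eq_one_of_prodMk_mul_left_eq {g : G} {p : X × G} (h : (p.1, g * p.2) = p) : g = 1 :=
  mul_eq_right.mp (congrArg Prod.snd h)

end LeftMulOnSecondFactor

theorem QuotientGroup.mk_mul_mul_eq_smul {G : Type*} [Group G] (H : Subgroup G) (g h k : G) :
    (QuotientGroup.mk (g * h * k) : G ⧸ H) = g • QuotientGroup.mk (h * k) := by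
  rw [mul_assoc]
  rfl

theorem factored_lift_group_action_free_on_arcs_general
    (V A : Type)
    (G : Type) [Group G]
    (tail head : A → V)
    (α : A → G)
    (ω : V → Subgroup G) :
    let LV := Σ u : V, G ⧸ ω u
    let ltail : A × G → LV := fun p => ⟨tail p.1, QuotientGroup.mk p.2⟩
    let lhead : A × G → LV := fun p => ⟨head p.1, QuotientGroup.mk (p.2 * α p.1)⟩
    let vmap : G → LV → LV := fun g x => ⟨x.1, g • x.2⟩
    let amap : G → A × G → A × G := fun g p => (p.1, g * p.2)
    (∀ g : G, Function.Bijective (vmap g) ∧ Function.Bijective (amap g)) ∧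
    (∀ (g : G) (p : A × G),
        ltail (amap g p) = vmap g (ltail p) ∧ lhead (amap g p) = vmap g (lhead p)) ∧
    (∀ x : LV, vmap 1 x = x) ∧ (∀ p : A × G, amap 1 p = p) ∧
    (∀ (g g' : G) (x : LV), vmap (g * g') x = vmap g (vmap g' x)) ∧
    (∀ (g g' : G) (p : A × G), amap (g * g') p = amap g (amap g' p)) ∧
    (∀ (g : G) (p : A × G), amap g p = p → g = 1) := by
  intro LV ltail lhead vmap amap
  -- `vmap g` is definitionally `(g • ·)` for the fibrewise `MulAction G LV` instance on `Sigma`.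
  refine ⟨fun g => ⟨MulAction.bijective g, bijective_prodMk_mul_left g⟩,
    fun g p => ⟨rfl, ?_⟩, one_smul G, fun p => Prod.ext rfl (one_mul p.2), mul_smul,
    fun g g' p => Prod.ext rfl (mul_assoc g g' p.2), fun g p => eq_one_of_prodMk_mul_left_eq⟩
  exact congrArg (Sigma.mk (head p.1)) (QuotientGroup.mk_mul_mul_eq_smul _ g p.2 (α p.1))

/-- Left multiplication `g • (u, hG_u) = (u, ghG_u)` on vertices and
`g • (a, h) = (a, gh)` on arcs defines an action of `G` on the factored lift by graph
automorphisms (bijections of vertices and arcs preserving tails and heads, satisfying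
the action laws), and this action is free on the arc set. -/
theorem factored_lift_group_action_free_on_arcs
    (V A : Type) [Fintype V] [Fintype A]
    (G : Type) [Group G] [Fintype G]
    (tail head : A → V) (rev : A → A)
    (hrev : ∀ a, rev (rev a) = a) (hrevtail : ∀ a, tail (rev a) = head a)
    (α : A → G) (hα : ∀ a, α (rev a) = (α a)⁻¹)
    (ω : V → Subgroup G) :
    let LV := Σ u : V, G ⧸ ω u
    let ltail : A × G → LV := fun p => ⟨tail p.1, QuotientGroup.mk p.2⟩
    let lhead : A × G → LV := fun p => ⟨head p.1, QuotientGroup.mk (p.2 * α p.1)⟩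
    let vmap : G → LV → LV := fun g x => ⟨x.1, g • x.2⟩
    let amap : G → A × G → A × G := fun g p => (p.1, g * p.2)
    (∀ g : G, Function.Bijective (vmap g) ∧ Function.Bijective (amap g)) ∧
    (∀ (g : G) (p : A × G),
        ltail (amap g p) = vmap g (ltail p) ∧ lhead (amap g p) = vmap g (lhead p)) ∧
    (∀ x : LV, vmap 1 x = x) ∧ (∀ p : A × G, amap 1 p = p) ∧
    (∀ (g g' : G) (x : LV), vmap (g * g') x = vmap g (vmap g' x)) ∧
    (∀ (g g' : G) (p : A × G), amap (g * g') p = amap g (amap g' p)) ∧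
    (∀ (g : G) (p : A × G), amap g p = p → g = 1) :=
  factored_lift_group_action_free_on_arcs_general V A G tail head α ω
end

section
/- Let Γ be a finite graph on vertex set V with combined voltage assignment (α,ω) in a finite group G, and let B be the V×V matrix over the complex group algebra ℂ[G] with entries B_{u,v} = (Σ_{g∈G_u} g)·Σ_{a∈arcs(u,v)} α(a). If the (u,u) entry of B^ℓ is written as Σ_{g∈G} b_g^(ℓ) g, then b_e^(ℓ) = b_g^(ℓ) for every g ∈ G_u, where e is the identity of G. -/
open scoped Classical

/-!
Every row `x` of `B` is left-divisible by the subgroup sum `σ_x = ∑_{h ∈ ω x} h`, so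
`B = diag(σ) · D` and `(B ^ (m + 1)) u u = σ_u · (D · B ^ m) u u`. Left multiplication by any
`g ∈ ω u` permutes the terms of `σ_u`, so `g · (B ^ (m + 1)) u u = (B ^ (m + 1)) u u`, and
comparing the coefficients of `g` on both sides gives `b_g = b_e`.
-/

namespace MonoidAlgebra

variable {k G : Type*} [Semiring k] [Group G]

variable (k) in
noncomputable def subgroupSum (H : Subgroup G) [Fintype H] : MonoidAlgebra k G :=
  ∑ h : H, of k G h

theorem of_mul_subgroupSum {H : Subgroup G} [Fintype H] {g : G} (hg : g ∈ H) :
    of k G g * subgroupSum k H = subgroupSum k H := by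
  rw [subgroupSum, Finset.mul_sum]
  exact Fintype.sum_equiv (Equiv.mulLeft (⟨g, hg⟩ : H)) _ _ fun h => (map_mul (of k G) g h).symm

theorem coeff_eq_coeff_one_of_of_mul_eq {x : MonoidAlgebra k G} {g : G}
    (hx : of k G g * x = x) : x.coeff g = x.coeff 1 := by
  conv_lhs => rw [← hx]
  simp

theorem coeff_subgroupSum_mul_of_mem {H : Subgroup G} [Fintype H] (y : MonoidAlgebra k G)
    {g : G} (hg : g ∈ H) : (subgroupSum k H * y).coeff g = (subgroupSum k H * y).coeff 1 :=
  coeff_eq_coeff_one_of_of_mul_eq (by rw [← mul_assoc, of_mul_subgroupSum hg])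

end MonoidAlgebra

theorem group_algebra_matrix_power_diagonal_coeff_invariant_general
    (V A : Type) [Fintype V] [Fintype A]
    (G : Type) [Group G] [Fintype G]
    (tail head : A → V)
    (α : A → G)
    (ω : V → Subgroup G)
    (u : V) (m : ℕ) (g : G) (hg : g ∈ ω u) :
    let B : Matrix V V (MonoidAlgebra ℂ G) := fun x y =>
      (∑ h : ω x, MonoidAlgebra.of ℂ G (h : G)) *
        ∑ a ∈ Finset.univ.filter (fun a : A => tail a = x ∧ head a = y),
          MonoidAlgebra.of ℂ G (α a)
    ((B ^ (m + 1)) u u).coeff 1 = ((B ^ (m + 1)) u u).coeff g := by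
  intro B
  let D : Matrix V V (MonoidAlgebra ℂ G) := fun x y =>
    ∑ a ∈ Finset.univ.filter (fun a : A => tail a = x ∧ head a = y), MonoidAlgebra.of ℂ G (α a)
  have hB : B = Matrix.diagonal (fun x => MonoidAlgebra.subgroupSum ℂ (ω x)) * D := by
    funext x y
    rw [Matrix.diagonal_mul]
    rfl
  have hdiag : (B ^ (m + 1)) u u = MonoidAlgebra.subgroupSum ℂ (ω u) * (D * B ^ m) u u := by
    rw [pow_succ', hB, Matrix.mul_assoc, Matrix.diagonal_mul]
  rw [hdiag, MonoidAlgebra.coeff_subgroupSum_mul_of_mem _ hg]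

/-- Let `B` be the `V × V` matrix over the group algebra `ℂ[G]` with
entries `B u v = (∑_{h ∈ ω u} h) · ∑_{a ∈ arcs(u,v)} α(a)`.  If the `(u,u)` entry of
`B ^ ℓ` (for `ℓ = m + 1 ≥ 1`) is `∑_{g ∈ G} b_g g`, then `b_e = b_g`
for every `g ∈ G_u = ω u`. -/
theorem group_algebra_matrix_power_diagonal_coeff_invariant
    (V A : Type) [Fintype V] [Fintype A]
    (G : Type) [Group G] [Fintype G]
    (tail head : A → V) (rev : A → A)
    (hrev : ∀ a, rev (rev a) = a) (hrevtail : ∀ a, tail (rev a) = head a)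
    (α : A → G) (hα : ∀ a, α (rev a) = (α a)⁻¹)
    (ω : V → Subgroup G)
    (u : V) (m : ℕ) (g : G) (hg : g ∈ ω u) :
    let B : Matrix V V (MonoidAlgebra ℂ G) := fun x y =>
      (∑ h : ω x, MonoidAlgebra.of ℂ G (h : G)) *
        ∑ a ∈ Finset.univ.filter (fun a : A => tail a = x ∧ head a = y),
          MonoidAlgebra.of ℂ G (α a)
    ((B ^ (m + 1)) u u).coeff 1 = ((B ^ (m + 1)) u u).coeff g :=
  group_algebra_matrix_power_diagonal_coeff_invariant_general V A G tail head α ω u m g hg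
end

section
/- Let Γ be a finite graph on vertex set V with combined voltage assignment (α,ω) in a finite group G, and let B be the matrix over ℂ[G] with entries B_{u,v} = (Σ_{g∈G_u} g)·Σ_{a∈arcs(u,v)} α(a). Write (B^ℓ)_{u,u} = Σ_{g∈G} b_g^(ℓ) g. Then the number of closed walks of length ℓ in the factored lift Γ^(α,ω) rooted at the vertex (u, G_u) equals |G_u| · b_e^(ℓ). -/
/-!
Write a walk in the factored lift starting at `(u, G_u)` as arcs `(a_j, h_j)`, and put
`g_j = (h_{j-1} α(a_{j-1}))⁻¹ h_j` (with `h_{-1} α(a_{-1}) := 1`). The walk condition says exactly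
that the `a_j` form a walk in `Γ` and that `g_j ∈ G_{tail a_j}`. Conversely, the `h_j` are recovered
as the partial products `h_j = g_0 α(a_0) ⋯ g_{j-1} α(a_{j-1}) g_j`. So walks in the lift correspond
to walks in `Γ` decorated by stabiliser elements. Such a walk returns to `(u, G_u)` iff the
underlying walk returns to `u` and the full product `g_0 α(a_0) ⋯ g_{ℓ-1} α(a_{ℓ-1})` lies in `G_u`.

Expanding `(B^ℓ)_{u,u}` over decorated closed walks, the number of walks whose product is `k` is
`b_k`, so the closed lift walks number `∑_{k ∈ G_u} b_k`. Every row `u` of `B` is fixed by left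
multiplication by `G_u`, hence so is row `u` of `B^ℓ`, and therefore `b_k = b_e` for `k ∈ G_u`.
-/

open scoped Classical
open Finset

namespace ArcWalk

variable {V E : Type*} (src tgt : E → V)

def vertexSeq (x : V) {n : ℕ} (q : Fin n → E) : Fin (n + 1) → V :=
  Fin.cons x fun i => tgt (q i)

def IsWalkFrom (x : V) {n : ℕ} (q : Fin n → E) : Prop :=
  ∀ i, vertexSeq tgt x q i.castSucc = src (q i)

variable {src tgt}

lemma vertexSeq_cons (x : V) {n : ℕ} (e : E) (q : Fin n → E) :
    vertexSeq tgt x (Fin.cons e q) = Fin.cons x (vertexSeq tgt (tgt e) q) :=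
  congrArg (Fin.cons (α := fun _ => V) x) (funext fun i => Fin.cases rfl (fun _ => rfl) i)

lemma isWalkFrom_cons {x : V} {n : ℕ} {e : E} {q : Fin n → E} :
    IsWalkFrom src tgt x (Fin.cons e q) ↔ x = src e ∧ IsWalkFrom src tgt (tgt e) q := by
  simp only [IsWalkFrom, Fin.forall_fin_succ, vertexSeq_cons, Fin.castSucc_zero, Fin.cons_zero,
    ← Fin.succ_castSucc, Fin.cons_succ]

lemma isWalkFrom_and_closed_iff {x : V} {n : ℕ} {q : Fin (n + 1) → E} :
    IsWalkFrom src tgt x q ∧ vertexSeq tgt x q (Fin.last (n + 1)) = x ↔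
      src (q 0) = x ∧ ∀ j, tgt (q j) = src (q (j + 1)) := by
  rw [Fin.forall_fin_succ']
  simp only [IsWalkFrom, Fin.forall_fin_succ, vertexSeq, Fin.castSucc_zero, Fin.cons_zero,
    ← Fin.succ_castSucc, Fin.cons_succ, ← Fin.succ_last, Fin.coeSucc_eq_succ, Fin.last_add_one]
  grind

variable [Fintype E] {R : Type*} [Semiring R]

noncomputable def arcMatrix (src tgt : E → V) (wt : E → R) : Matrix V V R :=
  Matrix.of fun x y => ∑ e with src e = x ∧ tgt e = y, wt e

lemma arcMatrix_apply (wt : E → R) (x y : V) :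
    arcMatrix src tgt wt x y = ∑ e with src e = x ∧ tgt e = y, wt e := rfl

theorem arcMatrix_pow_apply [Fintype V] (wt : E → R) (n : ℕ) (x y : V) :
    (arcMatrix src tgt wt ^ n) x y =
      ∑ q : Fin n → E with IsWalkFrom src tgt x q ∧ vertexSeq tgt x q (Fin.last n) = y,
        (List.ofFn fun i => wt (q i)).prod := by
  induction n generalizing x with
  | zero => by_cases h : x = y <;> simp [IsWalkFrom, vertexSeq, h]
  | succ n ih =>
    rw [pow_succ', Matrix.mul_apply, Finset.sum_filter, ← (Fin.consEquiv fun _ => E).sum_comp,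
      Fintype.sum_prod_type]
    simp only [Fin.consEquiv, Equiv.coe_fn_mk, isWalkFrom_cons, vertexSeq_cons, Fin.cons_last,
      List.ofFn_succ, Fin.cons_zero, Fin.cons_succ, List.prod_cons, arcMatrix_apply, ih,
      Finset.sum_mul_sum]
    simp only [Finset.sum_filter]
    rw [Finset.sum_comm]
    refine Fintype.sum_congr _ _ fun e => ?_
    by_cases hx : x = src e <;> simp [hx, ite_and, eq_comm]

end ArcWalk

lemma Fin.partialProd_last {M : Type*} [Monoid M] {n : ℕ} (f : Fin n → M) :
    Fin.partialProd f (Fin.last n) = (List.ofFn f).prod := by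
  simp [Fin.partialProd, List.take_of_length_le]

lemma Sigma.mk_quotientGroup_eq_iff {V G : Type*} [Group G] {ω : V → Subgroup G} {x y : V}
    {s t : G} : (⟨x, (s : G ⧸ ω x)⟩ : Σ v, G ⧸ ω v) = ⟨y, t⟩ ↔ x = y ∧ s⁻¹ * t ∈ ω y := by
  constructor
  · intro h
    obtain ⟨rfl, h⟩ := Sigma.mk.inj_iff.1 h
    exact ⟨rfl, QuotientGroup.eq.1 (eq_of_heq h)⟩
  · rintro ⟨rfl, h⟩
    exact congrArg _ (QuotientGroup.eq.2 h)

lemma MonoidAlgebra.sum_coeff_sum_of {R G ι : Type*} [Semiring R] [Monoid G] (s : Finset ι)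
    (f : ι → G) (T : Finset G) :
    ∑ g ∈ T, (∑ i ∈ s, MonoidAlgebra.of R G (f i)).coeff g = #{i ∈ s | f i ∈ T} := by
  simp only [MonoidAlgebra.coeff_sum, MonoidAlgebra.of_apply, MonoidAlgebra.coeff_single,
    Finsupp.single_apply, Finset.sum_apply', Finset.card_filter, Nat.cast_sum, Nat.cast_ite, Nat.cast_one,
    Nat.cast_zero]
  rw [Finset.sum_comm]
  simp [Finset.sum_ite_eq]

namespace FactoredLift

open ArcWalk

section Lift

variable {V A G : Type*} [Group G] (tail head : A → V) (α : A → G) (ω : V → Subgroup G)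

def voltage (p : A × G) : G := p.2 * α p.1

def liftTail (p : A × G) : Σ x : V, G ⧸ ω x := ⟨tail p.1, p.2⟩

def liftHead (p : A × G) : Σ x : V, G ⧸ ω x := ⟨head p.1, (voltage α p : G)⟩

/-- The summands `g α(a)`, `g ∈ G_{tail a}`, of the entries of `B`. -/
abbrev DecoratedArc := Σ a : A, ω (tail a)

variable {tail head α ω}

variable (α) in
def DecoratedArc.weight (e : DecoratedArc tail ω) : G := voltage α (e.1, e.2)

lemma vertexSeq_liftHead (x : V) {n : ℕ} (p : Fin n → A × G) (i : Fin (n + 1)) :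
    vertexSeq (liftHead head α ω) ⟨x, ((1 : G) : G ⧸ ω x)⟩ p i =
      ⟨vertexSeq (fun p => head p.1) x p i, (vertexSeq (voltage α) 1 p i : G)⟩ :=
  Fin.cases rfl (fun _ => rfl) i

lemma isWalkFrom_lift_iff {x : V} {n : ℕ} {p : Fin n → A × G} :
    IsWalkFrom (liftTail tail ω) (liftHead head α ω) ⟨x, ((1 : G) : G ⧸ ω x)⟩ p ↔
      IsWalkFrom (fun p => tail p.1) (fun p => head p.1) x p ∧
        ∀ i, (vertexSeq (voltage α) 1 p i.castSucc)⁻¹ * (p i).2 ∈ ω (tail (p i).1) := by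
  simp only [IsWalkFrom, vertexSeq_liftHead, liftTail, Sigma.mk_quotientGroup_eq_iff, forall_and]

variable (α) in
def liftOfDecorated {n : ℕ} (q : Fin n → DecoratedArc tail ω) : Fin n → A × G :=
  fun i => ((q i).1, Fin.partialProd (fun j => (q j).weight α) i.castSucc * (q i).2)

lemma vertexSeq_voltage_liftOfDecorated {n : ℕ} (q : Fin n → DecoratedArc tail ω) :
    vertexSeq (voltage α) 1 (liftOfDecorated α q) = Fin.partialProd fun j => (q j).weight α := by
  funext i
  induction i using Fin.cases with
  | zero => rfl
  | succ i =>
    simp only [vertexSeq, Fin.cons_succ, Fin.partialProd_succ, voltage, liftOfDecorated,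
      DecoratedArc.weight, mul_assoc]

lemma partialProd_inv_mul_voltage {n : ℕ} (p : Fin n → A × G) :
    (Fin.partialProd fun i =>
      voltage α ((p i).1, (vertexSeq (voltage α) 1 p i.castSucc)⁻¹ * (p i).2)) =
      vertexSeq (voltage α) 1 p := by
  have h := Fin.partialProd_left_inv (vertexSeq (voltage α) 1 p)
  rw [show vertexSeq (voltage α) 1 p 0 = 1 from rfl, one_smul] at h
  simp only [voltage, mul_assoc]
  exact h

variable (tail head α ω) in
def liftWalkEquiv (x : V) (n : ℕ) :
    {p : Fin n → A × G //
      IsWalkFrom (liftTail tail ω) (liftHead head α ω) ⟨x, ((1 : G) : G ⧸ ω x)⟩ p} ≃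
      {q : Fin n → DecoratedArc tail ω // IsWalkFrom (fun e => tail e.1) (fun e => head e.1) x q}
    where
  toFun p := ⟨fun i => ⟨(p.1 i).1, _, (isWalkFrom_lift_iff.1 p.2).2 i⟩,
    (isWalkFrom_lift_iff.1 p.2).1⟩
  invFun q := ⟨liftOfDecorated α q.1, isWalkFrom_lift_iff.2
    ⟨(q.2 : IsWalkFrom (fun p : A × G => tail p.1) (fun p => head p.1) x (liftOfDecorated α q.1)),
      fun i => by simp [vertexSeq_voltage_liftOfDecorated, liftOfDecorated]⟩⟩
  left_inv p := by
    ext i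
    · rfl
    · simp only [liftOfDecorated, DecoratedArc.weight, partialProd_inv_mul_voltage,
        mul_inv_cancel_left]
  right_inv q := by
    ext i
    · rfl
    · simp only [vertexSeq_voltage_liftOfDecorated, liftOfDecorated, inv_mul_cancel_left]

variable (tail head α ω) in
def closedLiftWalkEquiv (x : V) (n : ℕ) :
    {p : Fin n → A × G //
      IsWalkFrom (liftTail tail ω) (liftHead head α ω) ⟨x, ((1 : G) : G ⧸ ω x)⟩ p ∧
        vertexSeq (liftHead head α ω) ⟨x, ((1 : G) : G ⧸ ω x)⟩ p (Fin.last n) = ⟨x, (1 : G)⟩} ≃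
      {q : Fin n → DecoratedArc tail ω //
        IsWalkFrom (fun e => tail e.1) (fun e => head e.1) x q ∧
          vertexSeq (fun e => head e.1) x q (Fin.last n) = x ∧
            (List.ofFn fun i => (q i).weight α).prod ∈ ω x} :=
  (Equiv.subtypeSubtypeEquivSubtypeInter _ _).symm.trans <|
    ((liftWalkEquiv tail head α ω x n).subtypeEquiv fun p => by
      rw [vertexSeq_liftHead, Sigma.mk_quotientGroup_eq_iff, ← Fin.partialProd_last]
      simp only [liftWalkEquiv, Equiv.coe_fn_mk, DecoratedArc.weight, partialProd_inv_mul_voltage,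
        mul_one, inv_mem_iff]
      rfl).trans
    (Equiv.subtypeSubtypeEquivSubtypeInter _ _)

end Lift

section VoltageMatrix

variable {V A G : Type*} [Fintype A] [Group G] [Fintype G] (R : Type*) [Semiring R]
  (tail head : A → V) (α : A → G) (ω : V → Subgroup G)

noncomputable def voltageMatrix : Matrix V V (MonoidAlgebra R G) := fun x y =>
  (∑ h : ω x, MonoidAlgebra.of R G (h : G)) *
    ∑ a ∈ Finset.univ.filter (fun a : A => tail a = x ∧ head a = y), MonoidAlgebra.of R G (α a)

lemma voltageMatrix_eq_arcMatrix :
    voltageMatrix R tail head α ω =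
      arcMatrix (fun e : DecoratedArc tail ω => tail e.1) (fun e => head e.1)
        fun e => MonoidAlgebra.of R G (e.weight α) := by
  refine Matrix.ext fun x y => ?_
  rw [voltageMatrix, arcMatrix_apply, Finset.sum_mul_sum, Finset.sum_comm, Finset.sum_filter,
    Finset.sum_filter, Fintype.sum_sigma]
  refine Fintype.sum_congr _ _ fun a => ?_
  split_ifs with h
  · obtain ⟨rfl, -⟩ := h
    simp [DecoratedArc.weight, voltage]
  · simp

variable {R tail head α ω}

lemma of_mul_voltageMatrix {x : V} {k : G} (hk : k ∈ ω x) (y : V) :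
    MonoidAlgebra.of R G k * voltageMatrix R tail head α ω x y =
      voltageMatrix R tail head α ω x y := by
  simp only [voltageMatrix, ← mul_assoc]
  congr 1
  rw [Finset.mul_sum]
  simp only [← map_mul]
  exact Equiv.sum_comp (Equiv.mulLeft (⟨k, hk⟩ : ω x)) fun h => MonoidAlgebra.of R G (h : G)

variable [Fintype V]

lemma coeff_voltageMatrix_pow_succ_of_mem {x : V} {k : G} (hk : k ∈ ω x) (n : ℕ) (y : V) :
    ((voltageMatrix R tail head α ω ^ (n + 1)) x y).coeff k =
      ((voltageMatrix R tail head α ω ^ (n + 1)) x y).coeff 1 := by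
  have h : MonoidAlgebra.of R G k * (voltageMatrix R tail head α ω ^ (n + 1)) x y =
      (voltageMatrix R tail head α ω ^ (n + 1)) x y := by
    simp only [pow_succ', Matrix.mul_apply, Finset.mul_sum, ← mul_assoc, of_mul_voltageMatrix hk]
  nth_rw 1 [← h]
  rw [MonoidAlgebra.of_apply, MonoidAlgebra.coeff_single_mul_apply, inv_mul_cancel, one_mul]

lemma sum_coeff_voltageMatrix_pow (n : ℕ) (x y : V) (T : Finset G) :
    ∑ g ∈ T, ((voltageMatrix R tail head α ω ^ n) x y).coeff g =
      #{q : Fin n → DecoratedArc tail ω | IsWalkFrom (fun e => tail e.1) (fun e => head e.1) x q ∧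
          vertexSeq (fun e => head e.1) x q (Fin.last n) = y ∧
            (List.ofFn fun i => (q i).weight α).prod ∈ T} := by
  have hprod (q : Fin n → DecoratedArc tail ω) :
      (List.ofFn fun i => MonoidAlgebra.of R G ((q i).weight α)).prod =
        MonoidAlgebra.of R G (List.ofFn fun i => (q i).weight α).prod := by
    rw [map_list_prod, List.map_ofFn]
    rfl
  simp only [voltageMatrix_eq_arcMatrix, arcMatrix_pow_apply, hprod,
    MonoidAlgebra.sum_coeff_sum_of, Finset.filter_filter, and_assoc]

lemma card_closedDecoratedWalk (x : V) (n : ℕ) :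
    (Nat.card {q : Fin (n + 1) → DecoratedArc tail ω //
        IsWalkFrom (fun e => tail e.1) (fun e => head e.1) x q ∧
          vertexSeq (fun e => head e.1) x q (Fin.last (n + 1)) = x ∧
            (List.ofFn fun i => (q i).weight α).prod ∈ ω x} : R) =
      Nat.card (ω x) * ((voltageMatrix R tail head α ω ^ (n + 1)) x x).coeff 1 := by
  calc _ = ∑ g ∈ univ.filter (· ∈ ω x), ((voltageMatrix R tail head α ω ^ (n + 1)) x x).coeff g := by
        rw [sum_coeff_voltageMatrix_pow, Nat.card_eq_fintype_card, Fintype.card_subtype]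
        simp
    _ = ∑ g ∈ univ.filter (· ∈ ω x), ((voltageMatrix R tail head α ω ^ (n + 1)) x x).coeff 1 :=
        Finset.sum_congr rfl fun g hg =>
          coeff_voltageMatrix_pow_succ_of_mem (Finset.mem_filter.1 hg).2 n x
    _ = _ := by rw [Finset.sum_const, nsmul_eq_mul, Nat.card_eq_fintype_card, Fintype.card_subtype]

end VoltageMatrix

end FactoredLift

open ArcWalk FactoredLift

theorem factored_lift_closed_walk_count_general
    (V A : Type) [Fintype V] [Fintype A]
    (G : Type) [Group G] [Fintype G]
    (tail head : A → V)
    (α : A → G)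
    (ω : V → Subgroup G)
    (u : V) (m : ℕ) :
    let LV := Σ x : V, G ⧸ ω x
    let ltail : A × G → LV := fun p => ⟨tail p.1, QuotientGroup.mk p.2⟩
    let lhead : A × G → LV := fun p => ⟨head p.1, QuotientGroup.mk (p.2 * α p.1)⟩
    let B : Matrix V V (MonoidAlgebra ℂ G) := fun x y =>
      (∑ h : ω x, MonoidAlgebra.of ℂ G (h : G)) *
        ∑ a ∈ Finset.univ.filter (fun a : A => tail a = x ∧ head a = y),
          MonoidAlgebra.of ℂ G (α a)
    (Nat.card {p : Fin (m + 1) → A × G //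
        ltail (p 0) = ⟨u, QuotientGroup.mk 1⟩ ∧
        ∀ j : Fin (m + 1), lhead (p j) = ltail (p (j + 1))} : ℂ)
      = (Nat.card (ω u) : ℂ) * ((B ^ (m + 1)) u u).coeff 1 := by
  intro LV ltail lhead B
  have hequiv := (Equiv.subtypeEquivRight fun _ => isWalkFrom_and_closed_iff.symm).trans
    (closedLiftWalkEquiv tail head α ω u (m + 1))
  exact (congrArg Nat.cast (Nat.card_congr hequiv)).trans (card_closedDecoratedWalk u m)

/-- With `B` the `ℂ[G]`-matrix of the combined voltage graph
(`B u v = (∑_{h ∈ ω u} h)·∑_{a ∈ arcs(u,v)} α(a)`), the number of closed walks of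
length `ℓ = m + 1` in the factored lift rooted at the vertex `(u, G_u)` equals
`|G_u| · b_e`, where `(B^ℓ)_{u,u} = ∑_g b_g g` and `e` is the identity of `G`. -/
theorem factored_lift_closed_walk_count
    (V A : Type) [Fintype V] [Fintype A]
    (G : Type) [Group G] [Fintype G]
    (tail head : A → V) (rev : A → A)
    (hrev : ∀ a, rev (rev a) = a) (hrevtail : ∀ a, tail (rev a) = head a)
    (α : A → G) (hα : ∀ a, α (rev a) = (α a)⁻¹)
    (ω : V → Subgroup G)
    (u : V) (m : ℕ) :
    let LV := Σ x : V, G ⧸ ω x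
    let ltail : A × G → LV := fun p => ⟨tail p.1, QuotientGroup.mk p.2⟩
    let lhead : A × G → LV := fun p => ⟨head p.1, QuotientGroup.mk (p.2 * α p.1)⟩
    let B : Matrix V V (MonoidAlgebra ℂ G) := fun x y =>
      (∑ h : ω x, MonoidAlgebra.of ℂ G (h : G)) *
        ∑ a ∈ Finset.univ.filter (fun a : A => tail a = x ∧ head a = y),
          MonoidAlgebra.of ℂ G (α a)
    (Nat.card {p : Fin (m + 1) → A × G //
        ltail (p 0) = ⟨u, QuotientGroup.mk 1⟩ ∧
        ∀ j : Fin (m + 1), lhead (p j) = ltail (p (j + 1))} : ℂ)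
      = (Nat.card (ω u) : ℂ) * ((B ^ (m + 1)) u u).coeff 1 :=
  factored_lift_closed_walk_count_general V A G tail head α ω u m
end

section
/- Let Γ be a finite graph on k vertices with combined voltage assignment (α,ω) in a finite group G, let ρ be a complex irreducible representation of G of dimension d, and let B(ρ) be the dk×dk block matrix with (u,v) block Σ_{a∈arcs(u,v)} Σ_{h∈G_u} ρ(hα(a)). Then the u-th block-row of B(ρ), viewed as a d×dk matrix, has rank at most rank(Σ_{h∈G_u} ρ(h)); consequently the number of nonzero eigenvalues of B(ρ) (counted with algebraic multiplicity) is at most Σ_{u∈V} rank(Σ_{h∈G_u} ρ(h)). -/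
/-!
Since `ρ` is multiplicative, the `u`-th block-row of `B` is `(∑_{h ∈ ω u} ρ h)` times the
block-row `[∑_{a ∈ arcs(u,v)} ρ (α a)]_v`, which gives the first bound. Writing `B` as the sum
of its block-rows gives `rank B ≤ ∑_u rank (∑_{h ∈ ω u} ρ h)`, and a square matrix has at most
`rank` nonzero eigenvalues, because the multiplicity of `0` as a root of the characteristic
polynomial is at least the dimension of the kernel.
-/

open Polynomial Module

namespace Matrix

variable {ι m n K : Type*} [Fintype n] [Field K]

theorem rank_add_le (A B : Matrix m n K) : (A + B).rank ≤ A.rank + B.rank := by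
  rw [rank, rank, rank, mulVecLin_add]
  exact (Submodule.finrank_mono (LinearMap.range_add_le _ _)).trans
    (Submodule.finrank_add_le_finrank_add_finrank _ _)

theorem rank_sum_le (s : Finset ι) (A : ι → Matrix m n K) :
    (∑ i ∈ s, A i).rank ≤ ∑ i ∈ s, (A i).rank :=
  Finset.le_sum_of_subadditive rank (rank_zero (R := K)).le rank_add_le s A

theorem rank_le_sum_rank_submatrix_prodMk [Fintype ι] [Fintype m] [DecidableEq ι]
    [DecidableEq m] (A : Matrix (ι × m) n K) :
    A.rank ≤ ∑ u, (A.submatrix (Prod.mk u) id).rank := by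
  have hA : A = ∑ u, (1 : Matrix (ι × m) (ι × m) K).submatrix id (Prod.mk u) *
      A.submatrix (Prod.mk u) id := by
    ext ⟨v, i⟩ q
    simp [sum_apply, mul_apply, one_apply, Prod.ext_iff, ite_and]
  calc A.rank = _ := congrArg rank hA
    _ ≤ _ := rank_sum_le _ _
    _ ≤ _ := Finset.sum_le_sum fun u _ => rank_mul_le_right _ _

theorem finrank_ker_toLin'_le_rootMultiplicity_zero [DecidableEq n] (A : Matrix n n K) :
    finrank K (LinearMap.ker A.toLin') ≤ A.charpoly.rootMultiplicity 0 := by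
  rw [rootMultiplicity_eq_natTrailingDegree', ← charpoly_toLin',
    ← LinearMap.finrank_maxGenEigenspace_zero_eq, ← Module.End.eigenspace_zero]
  exact Submodule.finrank_mono Module.End.eigenspace_le_maxGenEigenspace

theorem card_filter_ne_zero_roots_charpoly_le_rank [DecidableEq n] [DecidableEq K]
    (A : Matrix n n K) :
    Multiset.card (A.charpoly.roots.filter (· ≠ 0)) ≤ A.rank := by
  have hroots : Multiset.card (A.charpoly.roots.filter (· ≠ 0)) + A.charpoly.roots.count 0
      ≤ Fintype.card n := by
    have hsplit : A.charpoly.roots.filter (· ≠ 0) + A.charpoly.roots.filter (0 = ·) =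
        A.charpoly.roots := by
      convert Multiset.filter_add_not (· ≠ 0) A.charpoly.roots using 3
      simp only [ne_eq, not_not, eq_comm]
    rw [Multiset.count_eq_card_filter_eq, ← Multiset.card_add, hsplit]
    exact (card_roots' _).trans (charpoly_natDegree_eq_dim A).le
  have hker := finrank_ker_toLin'_le_rootMultiplicity_zero A
  have hrank : A.rank + finrank K (LinearMap.ker A.toLin') = Fintype.card n := by
    rw [rank, ← toLin'_apply', LinearMap.finrank_range_add_finrank_ker, finrank_fintype_fun_eq_card]
  rw [count_roots] at hroots
  omega

variable {R : Type*} [CommRing R] [StrongRankCondition R]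

theorem rank_of_mul_blocks_le [Fintype ι] {m' : Type*} [Fintype m'] (P : Matrix m m' R)
    (N : ι → Matrix m' n R) :
    (of fun i (q : ι × n) => (P * N q.1) i q.2).rank ≤ P.rank := by
  have : (of fun i (q : ι × n) => (P * N q.1) i q.2) = P * of fun j q => N q.1 j q.2 := by
    ext; simp [mul_apply]
  rw [this]
  exact rank_mul_le_left _ _

end Matrix

theorem MonoidHom.sum_sum_map_mul {G R ι κ : Type*} [Monoid G] [Semiring R] (f : G →* R)
    (s : Finset ι) (t : Finset κ) (x : κ → G) (y : ι → G) :
    ∑ i ∈ s, ∑ j ∈ t, f (x j * y i) = (∑ j ∈ t, f (x j)) * ∑ i ∈ s, f (y i) := by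
  simp only [Finset.sum_mul_sum, map_mul]
  exact Finset.sum_comm

open scoped Classical

theorem block_matrix_rank_bound_nonzero_eigenvalues_general
    (V A : Type) [Fintype V] [Fintype A]
    (G : Type) [Group G] [Fintype G]
    (tail head : A → V)
    (α : A → G)
    (ω : V → Subgroup G)
    (d : ℕ) (ρ : G →* Matrix (Fin d) (Fin d) ℂ) :
    let B : Matrix (V × Fin d) (V × Fin d) ℂ := fun p q =>
      (∑ a ∈ Finset.univ.filter (fun a : A => tail a = p.1 ∧ head a = q.1),
        ∑ h : ω p.1, ρ ((h : G) * α a)) p.2 q.2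
    (∀ u : V,
      Matrix.rank (Matrix.of fun (i : Fin d) (q : V × Fin d) => B (u, i) q)
        ≤ Matrix.rank (∑ h : ω u, ρ (h : G))) ∧
    Multiset.card (Polynomial.roots (Matrix.charpoly B) |>.filter (· ≠ 0))
      ≤ ∑ u : V, Matrix.rank (∑ h : ω u, ρ (h : G)) := by
  intro B
  have hrow : ∀ u : V,
      Matrix.rank (Matrix.of fun (i : Fin d) (q : V × Fin d) => B (u, i) q)
        ≤ Matrix.rank (∑ h : ω u, ρ (h : G)) := fun u => by
    have hB : ∀ i q, B (u, i) q = ((∑ h : ω u, ρ (h : G)) *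
        ∑ a ∈ Finset.univ.filter (fun a : A => tail a = u ∧ head a = q.1), ρ (α a)) i q.2 :=
      fun i q => by rw [← ρ.sum_sum_map_mul]
    simp only [hB]
    exact Matrix.rank_of_mul_blocks_le _ fun v =>
      ∑ a ∈ Finset.univ.filter (fun a : A => tail a = u ∧ head a = v), ρ (α a)
  refine ⟨hrow, ?_⟩
  calc _ ≤ B.rank := B.card_filter_ne_zero_roots_charpoly_le_rank
    _ ≤ _ := B.rank_le_sum_rank_submatrix_prodMk
    _ ≤ _ := Finset.sum_le_sum fun u _ => hrow u

/-- Let `B(ρ)` be the `dk × dk` block matrix of a combined voltage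
graph with respect to an irreducible representation `ρ` of dimension `d`, whose
`(u,v)` block is `∑_{a ∈ arcs(u,v)} ∑_{h ∈ ω u} ρ(h α(a))`.  Then the `u`-th block-row
(a `d × dk` matrix) has rank at most `rank (∑_{h ∈ ω u} ρ h)`; consequently the number
of nonzero eigenvalues of `B(ρ)` counted with algebraic multiplicity is at most
`∑_u rank (∑_{h ∈ ω u} ρ h)`. -/
theorem block_matrix_rank_bound_nonzero_eigenvalues
    (V A : Type) [Fintype V] [Fintype A]
    (G : Type) [Group G] [Fintype G]
    (tail head : A → V) (rev : A → A)
    (hrev : ∀ a, rev (rev a) = a) (hrevtail : ∀ a, tail (rev a) = head a)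
    (α : A → G) (hα : ∀ a, α (rev a) = (α a)⁻¹)
    (ω : V → Subgroup G)
    (d : ℕ) (ρ : G →* Matrix (Fin d) (Fin d) ℂ)
    (hirr : ∀ W : Submodule ℂ (Fin d → ℂ),
      (∀ g : G, W.map (Matrix.mulVecLin (ρ g)) ≤ W) → W = ⊥ ∨ W = ⊤) :
    let B : Matrix (V × Fin d) (V × Fin d) ℂ := fun p q =>
      (∑ a ∈ Finset.univ.filter (fun a : A => tail a = p.1 ∧ head a = q.1),
        ∑ h : ω p.1, ρ ((h : G) * α a)) p.2 q.2
    (∀ u : V,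
      Matrix.rank (Matrix.of fun (i : Fin d) (q : V × Fin d) => B (u, i) q)
        ≤ Matrix.rank (∑ h : ω u, ρ (h : G))) ∧
    Multiset.card (Polynomial.roots (Matrix.charpoly B) |>.filter (· ≠ 0))
      ≤ ∑ u : V, Matrix.rank (∑ h : ω u, ρ (h : G)) :=
  block_matrix_rank_bound_nonzero_eigenvalues_general V A G tail head α ω d ρ
end

section
/- Let Γ be a finite graph on k vertices with combined voltage assignment (α,ω) in a finite group G, ρ an irreducible representation of dimension d, and B(ρ) the dk×dk matrix with blocks (Σ_{h∈G_u} ρ(h))·Σ_{a∈arcs(u,v)} ρ(α(a)). Let f be an eigenvector of B(ρ) for eigenvalue λ satisfying condition (C), and define f⁺(v,hG_v) := ρ(h)f(v). Then for every vertex (u,gG_u) of the factored lift, λ·f⁺(u,gG_u) = Σ over all arcs of the lift emanating from (u,gG_u) of f⁺ evaluated at the corresponding terminal vertices; that is, each coordinate-section of f⁺ is an eigenvector of the adjacency matrix of the factored lift Γ^(α,ω) with eigenvalue λ. -/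
open scoped Classical

/-!
Write `B(ρ)` as the block matrix of the blocks `M u v = ∑_{a : u → v} ∑_{h ∈ G_u} ρ(h α(a))`.
The eigen-equation at the block row `u` reads `λ f(u) = ∑_{tail a = u} ∑_{h ∈ G_u} ρ(h α(a)) f(head a)`.
Applying `ρ(g)` and substituting `x = g h` turns the inner sum over `G_u` into a sum over the
coset `g G_u`, and the pairs `(a, x)` with `tail a = u`, `x ∈ g G_u` are exactly the arcs of
the factored lift leaving `(u, g G_u)`.
-/

open Finset Matrix

theorem Matrix.comp_mulVec {I J K R : Type*} [Fintype J] [Fintype K]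
    [NonUnitalNonAssocSemiring R] (M : Matrix I J (Matrix K K R)) (f : J → K → R) (i : I) (k : K) :
    (Matrix.comp I J K K R M *ᵥ fun p => f p.1 p.2) (i, k) = (∑ j, M i j *ᵥ f j) k := by
  simp [mulVec, dotProduct, Fintype.sum_prod_type, Finset.sum_apply]

theorem Finset.sum_filter_coset_eq_sum_subgroup {G M : Type*} [Group G] [Fintype G]
    [AddCommMonoid M] (H : Subgroup G) (g : G) (φ : G → M) :
    ∑ x with (QuotientGroup.mk x : G ⧸ H) = QuotientGroup.mk g, φ x = ∑ h : H, φ (g * h) := by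
  refine sum_bij' (fun x hx => ⟨g⁻¹ * x, QuotientGroup.eq.mp (mem_filter.mp hx).2.symm⟩)
    (fun h _ => g * h) (fun _ _ => mem_univ _) (fun h _ => ?_) (fun _ _ => by simp)
    (fun _ _ => by simp) (fun _ _ => by simp)
  simp [QuotientGroup.eq]

section VoltageGraph

variable {V A G n R : Type*} [Fintype V] [Fintype A] [Group G] [Fintype G]
  [Fintype n] [DecidableEq n] [CommSemiring R]
  (tail head : A → V) (α : A → G) (ω : V → Subgroup G) (ρ : G →* Matrix n n R)

noncomputable def voltageBlock (u v : V) : Matrix n n R :=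
  ∑ a with tail a = u ∧ head a = v, ∑ h : ω u, ρ (h * α a)

theorem sum_voltageBlock_mulVec (f : V → n → R) (u : V) :
    ∑ v, voltageBlock tail head α ω ρ u v *ᵥ f v
      = ∑ a with tail a = u, ∑ h : ω u, ρ (h * α a) *ᵥ f (head a) := by
  rw [← sum_fiberwise _ head]
  refine sum_congr rfl fun v _ => ?_
  rw [voltageBlock, sum_mulVec, filter_filter]
  refine sum_congr rfl fun a ha => ?_
  rw [sum_mulVec, (mem_filter.mp ha).2.2]

theorem lift_eigen_equation (f : V → n → R) (lam : R)
    (heig : ∀ u, ∑ v, voltageBlock tail head α ω ρ u v *ᵥ f v = lam • f u) (u : V) (g : G) :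
    lam • ρ g *ᵥ f u
      = ∑ p : {p : A × G //
            tail p.1 = u ∧ (QuotientGroup.mk p.2 : G ⧸ ω u) = QuotientGroup.mk g},
          ρ ((p : A × G).2 * α (p : A × G).1) *ᵥ f (head (p : A × G).1) := by
  calc lam • ρ g *ᵥ f u
      = ∑ a with tail a = u, ∑ x with (QuotientGroup.mk x : G ⧸ ω u) = QuotientGroup.mk g,
          ρ (x * α a) *ᵥ f (head a) := by
        rw [← mulVec_smul, ← heig, sum_voltageBlock_mulVec, mulVec_sum]
        refine sum_congr rfl fun a _ => ?_
        rw [sum_filter_coset_eq_sum_subgroup, mulVec_sum]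
        refine sum_congr rfl fun h _ => ?_
        rw [mulVec_mulVec, ← map_mul, mul_assoc]
    _ = _ := by
        let F : A × G → n → R := fun p => ρ (p.2 * α p.1) *ᵥ f (head p.1)
        rw [← sum_subtype _ mem_filter_univ F, sum_finset_product (f := F) _ _ _ fun p => ?_]
        simp

end VoltageGraph

theorem condition_C_lift_eigenvector_general
    (V A : Type) [Fintype V] [Fintype A]
    (G : Type) [Group G] [Fintype G]
    (tail head : A → V)
    (α : A → G)
    (ω : V → Subgroup G)
    (d : ℕ) (ρ : G →* Matrix (Fin d) (Fin d) ℂ)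
    (B : Matrix (V × Fin d) (V × Fin d) ℂ)
    (hB : B = fun p q =>
      (∑ a ∈ Finset.univ.filter (fun a : A => tail a = p.1 ∧ head a = q.1),
        ∑ h : ω p.1, ρ ((h : G) * α a)) p.2 q.2)
    (f : V → Fin d → ℂ) (lam : ℂ)
    (heig : B.mulVec (fun p : V × Fin d => f p.1 p.2)
      = lam • (fun p : V × Fin d => f p.1 p.2)) :
    ∀ (u : V) (g : G),
      lam • Matrix.mulVec (ρ g) (f u)
        = ∑ p : {p : A × G //
              tail p.1 = u ∧ (QuotientGroup.mk p.2 : G ⧸ ω u) = QuotientGroup.mk g},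
            Matrix.mulVec (ρ ((p : A × G).2 * α (p : A × G).1)) (f (head (p : A × G).1)) := by
  intro u g
  refine lift_eigen_equation tail head α ω ρ f lam (fun u => funext fun i => ?_) u g
  have h := congrFun heig (u, i)
  rw [hB] at h
  exact (comp_mulVec _ _ u i).symm.trans h

/-- Let `f` be an eigenvector of `B(ρ)` for eigenvalue `λ` satisfying
condition (C), and set `f⁺(v, hG_v) := ρ h *ᵥ f v`.  Then for every vertex `(u, gG_u)`
of the factored lift, `λ · f⁺(u, gG_u)` equals the sum, over all arcs `(a, h)` of the
lift emanating from `(u, gG_u)`, of `f⁺` at the corresponding terminal vertices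
`(head a, h α(a) G_{head a})`; i.e. each coordinate-section of `f⁺` is an eigenvector
of the adjacency matrix of the factored lift with eigenvalue `λ`. -/
theorem condition_C_lift_eigenvector
    (V A : Type) [Fintype V] [Fintype A]
    (G : Type) [Group G] [Fintype G]
    (tail head : A → V) (rev : A → A)
    (hrev : ∀ a, rev (rev a) = a) (hrevtail : ∀ a, tail (rev a) = head a)
    (α : A → G) (hα : ∀ a, α (rev a) = (α a)⁻¹)
    (ω : V → Subgroup G)
    (d : ℕ) (ρ : G →* Matrix (Fin d) (Fin d) ℂ)
    (hirr : ∀ W : Submodule ℂ (Fin d → ℂ),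
      (∀ g : G, W.map (Matrix.mulVecLin (ρ g)) ≤ W) → W = ⊥ ∨ W = ⊤)
    (B : Matrix (V × Fin d) (V × Fin d) ℂ)
    (hB : B = fun p q =>
      (∑ a ∈ Finset.univ.filter (fun a : A => tail a = p.1 ∧ head a = q.1),
        ∑ h : ω p.1, ρ ((h : G) * α a)) p.2 q.2)
    (f : V → Fin d → ℂ) (lam : ℂ)
    (hf0 : (fun p : V × Fin d => f p.1 p.2) ≠ 0)
    (heig : B.mulVec (fun p : V × Fin d => f p.1 p.2)
      = lam • (fun p : V × Fin d => f p.1 p.2))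
    (hC : ∀ v : V, f v ≠ 0 → ∀ h ∈ ω v, ∀ h' ∈ ω v,
      Matrix.mulVec (ρ h) (f v) = Matrix.mulVec (ρ h') (f v)) :
    ∀ (u : V) (g : G),
      lam • Matrix.mulVec (ρ g) (f u)
        = ∑ p : {p : A × G //
              tail p.1 = u ∧ (QuotientGroup.mk p.2 : G ⧸ ω u) = QuotientGroup.mk g},
            Matrix.mulVec (ρ ((p : A × G).2 * α (p : A × G).1)) (f (head (p : A × G).1)) :=
  condition_C_lift_eigenvector_general V A G tail head α ω d ρ B hB f lam heig
end
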